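/- (Proposition 2, transience part) Let H be the fully-packed configuration consisting of all horizontal edges and no vertical edges. For every state s ∈ 𝒮 there exists a vertex w ∈ V with s → (H,w,w); consequently every state s ∈ 𝒮 ∖ ℛ communicates with a state t ∈ ℛ for which t → s fails, so every state of 𝒮 ∖ ℛ is transient. -/

import Mathlib

attribute [local instance] Classical.propDecidable

namespace FPL

/-- Vertices of the brick-wall honeycomb lattice with periodic boundary conditions. -/
abbrev Vtx (m n : ℕ) := ZMod m × ZMod n

/-- Adjacency on the brick-wall honeycomb lattice: horizontal edges between `(i,j)` and
`(i+1,j)`, and vertical edges between `(i,j)` and `(i,j+1)` whenever `i+j` is even. -/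
def HoneyAdj (m n : ℕ) (x y : Vtx m n) : Prop :=
  (x.2 = y.2 ∧ (y.1 = x.1 + 1 ∨ x.1 = y.1 + 1)) ∨
  (x.1 = y.1 ∧ ((y.2 = x.2 + 1 ∧ Even (x.1.val + x.2.val)) ∨
                (x.2 = y.2 + 1 ∧ Even (y.1.val + y.2.val))))

variable (m n : ℕ) [NeZero m] [NeZero n]

/-- The edge set of the brick-wall honeycomb lattice. -/
noncomputable def honeyEdges : Finset (Sym2 (Vtx m n)) :=
  Finset.image (fun p : Vtx m n × Vtx m n => s(p.1, p.2))
    (Finset.univ.filter fun p => HoneyAdj m n p.1 p.2)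

/-- `bdeg m n A x` is the degree of the vertex `x` in the spanning subgraph `(V, A)`. -/
noncomputable def bdeg (A : Finset (Sym2 (Vtx m n))) (x : Vtx m n) : ℕ :=
  (A.filter fun e => x ∈ e).card

/-- `(A,u,v)` is a state of the worm chain: `A ⊆ E`, and the set of odd-degree vertices of
`(V,A)` is `{u,v}` if `u ≠ v`, and is empty if `u = v`. -/
def IsWormState (A : Finset (Sym2 (Vtx m n))) (u v : Vtx m n) : Prop :=
  A ⊆ honeyEdges m n ∧ ∀ x, (Odd (bdeg m n A x) ↔ ((x = u ∨ x = v) ∧ u ≠ v))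

/-- The worm state space `𝒮`. -/
abbrev WormState := {p : Finset (Sym2 (Vtx m n)) × Vtx m n × Vtx m n //
  IsWormState m n p.1 p.2.1 p.2.2}

/-- The set `ℛ` of states with no isolated vertices. -/
def FullSupport (st : WormState m n) : Prop := ∀ x : Vtx m n, bdeg m n st.1.1 x ≠ 0

/-- The fully-packed worm transition matrix `P'_∞`. -/
noncomputable def Pinf : Matrix (WormState m n) (WormState m n) ℝ := fun st tt =>
  if st.1.2.1 = st.1.2.2 then
    (if tt = st then (bdeg m n st.1.1 st.1.2.2 : ℝ) / 3 else 0) +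
    (if ∃ v' : Vtx m n, HoneyAdj m n st.1.2.2 v' ∧ s(st.1.2.2, v') ∉ st.1.1 ∧
        tt.1.1 = insert s(st.1.2.2, v') st.1.1 ∧
        ((tt.1.2.1 = v' ∧ tt.1.2.2 = st.1.2.2) ∨ (tt.1.2.1 = st.1.2.2 ∧ tt.1.2.2 = v'))
      then 1/6 else 0)
  else
    (if bdeg m n st.1.1 st.1.2.1 = 3 ∧ ∃ u' : Vtx m n, HoneyAdj m n st.1.2.1 u' ∧
        s(st.1.2.1, u') ∈ st.1.1 ∧ tt.1.1 = st.1.1.erase s(st.1.2.1, u') ∧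
        tt.1.2.1 = u' ∧ tt.1.2.2 = st.1.2.2 then 1/6 else 0) +
    (if bdeg m n st.1.1 st.1.2.1 = 1 ∧ ∃ u' : Vtx m n, HoneyAdj m n st.1.2.1 u' ∧
        s(st.1.2.1, u') ∉ st.1.1 ∧ tt.1.1 = insert s(st.1.2.1, u') st.1.1 ∧
        tt.1.2.1 = u' ∧ tt.1.2.2 = st.1.2.2 then 1/4 else 0) +
    (if bdeg m n st.1.1 st.1.2.2 = 3 ∧ ∃ v' : Vtx m n, HoneyAdj m n st.1.2.2 v' ∧
        s(st.1.2.2, v') ∈ st.1.1 ∧ tt.1.1 = st.1.1.erase s(st.1.2.2, v') ∧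
        tt.1.2.1 = st.1.2.1 ∧ tt.1.2.2 = v' then 1/6 else 0) +
    (if bdeg m n st.1.1 st.1.2.2 = 1 ∧ ∃ v' : Vtx m n, HoneyAdj m n st.1.2.2 v' ∧
        s(st.1.2.2, v') ∉ st.1.1 ∧ tt.1.1 = insert s(st.1.2.2, v') st.1.1 ∧
        tt.1.2.1 = st.1.2.1 ∧ tt.1.2.2 = v' then 1/4 else 0)

/-- `st → tt`: some power of `P'_∞` has positive `(st,tt)` entry. -/
def Reaches (st tt : WormState m n) : Prop := ∃ k : ℕ, 0 < (Pinf m n ^ k) st tt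

/-- `st ↔ tt`: mutual reachability. -/
def Comm (st tt : WormState m n) : Prop := Reaches m n st tt ∧ Reaches m n tt st

/-- The fully-packed configuration consisting of all horizontal edges. -/
noncomputable def Hconfig : Finset (Sym2 (Vtx m n)) :=
  Finset.image (fun p : Vtx m n => s(p, (p.1 + 1, p.2))) Finset.univ

/-!
Every state is driven to a closed worm on `H` by lowering `#(A ∆ H)`. The head of an open worm
always has a move that toggles an edge of `A ∆ H` (at degree one a missing horizontal edge is
added, at degree three the present vertical edge is removed), so it walks until the worm closes. A
closed worm with `A ≠ H` has a site missing a horizontal edge, since otherwise an extra vertical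
edge would give some vertex the odd degree three. The closed worm slides there without changing
`A`, over a free edge in two moves or around an occupied one in four, and opens along the missing
edge.

Conversely, along any path from `H` the configuration stays two-regular away from the two ends of
the worm. The only delicate move is the one that closes the worm, whose ends are then adjacent:
the lattice is bipartite with colour classes of equal size, and summing degrees over either class
gives `#A`, which forces adjacent ends to have equal degree. Such configurations have no isolated
vertex, so `H` cannot reach a state outside `ℛ`.
-/

end FPL

open Finset Relation

theorem Matrix.exists_pow_apply_pos_iff_reflTransGen {ι R : Type*} [Fintype ι]
    [DecidableEq ι] [Ring R] [LinearOrder R] [IsStrictOrderedRing R] {M : Matrix ι ι R}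
    (hM : ∀ i j, 0 ≤ M i j) {i j : ι} :
    (∃ k, 0 < (M ^ k) i j) ↔ ReflTransGen (fun a b => 0 < M a b) i j := by
  constructor
  · rintro ⟨k, hk⟩
    induction k generalizing j with
    | zero =>
      rcases eq_or_ne i j with rfl | hij
      · exact .refl
      · simp [Matrix.one_apply_ne hij] at hk
    | succ k ih =>
      have hMk := Matrix.pow_apply_nonneg hM k
      rw [pow_succ, Matrix.mul_apply,
        sum_pos_iff_of_nonneg fun l _ => mul_nonneg (hMk i l) (hM l j)] at hk
      obtain ⟨l, -, hl⟩ := hk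
      exact .tail (ih (pos_of_mul_pos_left hl (hM l j))) (pos_of_mul_pos_right hl (hMk i l))
  · intro h
    induction h with
    | refl => exact ⟨0, by simp⟩
    | tail _ hbc ih =>
      obtain ⟨k, hk⟩ := ih
      refine ⟨k + 1, ?_⟩
      rw [pow_succ, Matrix.mul_apply]
      exact sum_pos' (fun l _ => mul_nonneg (Matrix.pow_apply_nonneg hM k _ l) (hM l _))
        ⟨_, mem_univ _, mul_pos hk hbc⟩

theorem ZMod.one_ne_zero_of_even {k : ℕ} (hk : Even k) : (1 : ZMod k) ≠ 0 :=
  have : Nontrivial (ZMod k) := ZMod.nontrivial_iff.2 (by rintro rfl; exact Nat.not_even_one hk)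
  one_ne_zero

theorem ZMod.add_one_eq_of_ne {a b : ZMod 2} (h : a ≠ b) : a + 1 = b := by
  revert a b; decide

theorem ZMod.val_sub_one_of_ne_zero {k : ℕ} [NeZero k] {a : ZMod k} (ha : a ≠ 0) :
    (a - 1).val = a.val - 1 := by
  have h1 : 1 ≤ a.val := Nat.one_le_iff_ne_zero.2 (by rwa [Ne, ZMod.val_eq_zero])
  have ha' : a - 1 = ((a.val - 1 : ℕ) : ZMod k) := by
    rw [Nat.cast_sub h1, ZMod.natCast_zmod_val, Nat.cast_one]
  rw [ha', ZMod.val_natCast_of_lt (by have := ZMod.val_lt a; omega)]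

lemma pos_ite_zero {c : Prop} [Decidable c] {a : ℝ} (hc : c) (ha : 0 < a) :
    0 < if c then a else 0 := by
  rwa [if_pos hc]

lemma add_four_pos {a b c d : ℝ} (ha : 0 ≤ a) (hb : 0 ≤ b) (hc : 0 ≤ c) (hd : 0 ≤ d)
    (h : 0 < a ∨ 0 < b ∨ 0 < c ∨ 0 < d) : 0 < a + b + c + d := by
  rcases h with h | h | h | h <;> linarith

namespace FPL

section

variable {m n : ℕ}

/-! ### The lattice -/

def color (x : Vtx m n) : ZMod 2 := ZMod.cast x.1 + ZMod.cast x.2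

def rightNbr (x : Vtx m n) : Vtx m n := (x.1 + 1, x.2)

def leftNbr (x : Vtx m n) : Vtx m n := (x.1 - 1, x.2)

def vertNbr (x : Vtx m n) : Vtx m n :=
  if color x = 0 then (x.1, x.2 + 1) else (x.1, x.2 - 1)

@[simp]
lemma rightNbr_leftNbr (x : Vtx m n) : rightNbr (leftNbr x) = x := by
  simp [rightNbr, leftNbr]

@[simp]
lemma leftNbr_rightNbr (x : Vtx m n) : leftNbr (rightNbr x) = x := by
  simp [rightNbr, leftNbr]

lemma rightNbr_eq_iff (x y : Vtx m n) : rightNbr y = x ↔ y = leftNbr x := by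
  constructor <;> rintro rfl <;> simp

lemma color_rightNbr (hm : Even m) (x : Vtx m n) : color (rightNbr x) = color x + 1 := by
  have h2 := even_iff_two_dvd.1 hm
  simp only [color, rightNbr, ZMod.cast_add h2, ZMod.cast_one h2]
  ring

lemma color_leftNbr (hm : Even m) (x : Vtx m n) : color (leftNbr x) = color x + 1 := by
  rw [← rightNbr_leftNbr x, color_rightNbr hm, leftNbr_rightNbr, CharTwo.add_cancel_right]

lemma color_add_one_snd (hn : Even n) (x : Vtx m n) : color (x.1, x.2 + 1) = color x + 1 := by
  have h2 := even_iff_two_dvd.1 hn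
  simp only [color, ZMod.cast_add h2, ZMod.cast_one h2]
  ring

lemma honeyAdj_symm {x y : Vtx m n} (h : HoneyAdj m n x y) : HoneyAdj m n y x := by
  rcases h with ⟨h1, h2 | h2⟩ | ⟨h1, h2 | h2⟩
  · exact .inl ⟨h1.symm, .inr h2⟩
  · exact .inl ⟨h1.symm, .inl h2⟩
  · exact .inr ⟨h1.symm, .inr ⟨h2.1, h1 ▸ h2.2⟩⟩
  · exact .inr ⟨h1.symm, .inl ⟨h2.1, h1.symm ▸ h2.2⟩⟩

lemma color_eq_add_one_of_honeyAdj (hm : Even m) (hn : Even n) {x y : Vtx m n}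
    (h : HoneyAdj m n x y) : color y = color x + 1 := by
  have key : ∀ {a b : Vtx m n}, b = (a.1 + 1, a.2) ∨ b = (a.1, a.2 + 1) →
      color b = color a + 1 := by
    rintro a b (rfl | rfl)
    exacts [color_rightNbr hm a, color_add_one_snd hn a]
  rcases h with ⟨h1, h2 | h2⟩ | ⟨h1, ⟨h2, -⟩ | ⟨h2, -⟩⟩
  · exact key (.inl (Prod.ext h2 h1.symm))
  · rw [key (.inl (Prod.ext h2 h1)), CharTwo.add_cancel_right]
  · exact key (.inr (Prod.ext h1.symm h2))
  · rw [key (.inr (Prod.ext h1 h2)), CharTwo.add_cancel_right]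

lemma rightNbr_ne_self (hm : Even m) (x : Vtx m n) : rightNbr x ≠ x := by
  simp [rightNbr, Prod.ext_iff, ZMod.one_ne_zero_of_even hm]

lemma leftNbr_ne_self (hm : Even m) (x : Vtx m n) : leftNbr x ≠ x := by
  simp [leftNbr, Prod.ext_iff, ZMod.one_ne_zero_of_even hm]

lemma vertNbr_ne_self (hn : Even n) (x : Vtx m n) : vertNbr x ≠ x := by
  unfold vertNbr; split_ifs <;> simp [Prod.ext_iff, ZMod.one_ne_zero_of_even hn]

lemma rightNbr_ne_leftNbr (hm2 : 2 < m) (x : Vtx m n) : rightNbr x ≠ leftNbr x := by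
  have h2 : ((2 : ℕ) : ZMod m) ≠ 0 := by
    rw [Ne, ZMod.natCast_eq_zero_iff]
    exact fun h => absurd (Nat.le_of_dvd two_pos h) (by omega)
  intro h
  apply h2
  have := congrArg Prod.fst h
  simp only [rightNbr, leftNbr] at this
  linear_combination this

lemma vertNbr_fst (x : Vtx m n) : (vertNbr x).1 = x.1 := by
  unfold vertNbr; split_ifs <;> rfl

lemma vertNbr_ne_rightNbr (hm : Even m) (x : Vtx m n) : vertNbr x ≠ rightNbr x :=
  fun h => rightNbr_ne_self hm x (Prod.ext (by rw [← h, vertNbr_fst]) rfl)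

lemma vertNbr_ne_leftNbr (hm : Even m) (x : Vtx m n) : vertNbr x ≠ leftNbr x :=
  fun h => leftNbr_ne_self hm x (Prod.ext (by rw [← h, vertNbr_fst]) rfl)

lemma bdeg_insert {A : Finset (Sym2 (Vtx m n))} {e : Sym2 (Vtx m n)} (he : e ∉ A) (x : Vtx m n) :
    bdeg m n (insert e A) x = bdeg m n A x + if x ∈ e then 1 else 0 := by
  rw [bdeg, bdeg, filter_insert]
  split_ifs
  · exact card_insert_of_notMem fun h => he (mem_filter.1 h).1
  · rfl

lemma bdeg_erase {A : Finset (Sym2 (Vtx m n))} {e : Sym2 (Vtx m n)} (he : e ∈ A) (x : Vtx m n) :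
    bdeg m n A x = bdeg m n (A.erase e) x + if x ∈ e then 1 else 0 := by
  conv_lhs => rw [← insert_erase he]
  exact bdeg_insert (notMem_erase e A) x

lemma odd_bdeg_insert {A : Finset (Sym2 (Vtx m n))} {e : Sym2 (Vtx m n)} (he : e ∉ A)
    (x : Vtx m n) : Odd (bdeg m n (insert e A) x) ↔ (Odd (bdeg m n A x) ↔ x ∉ e) := by
  rw [bdeg_insert he]
  split_ifs with hx <;> simp [hx, Nat.odd_add_one]

lemma odd_bdeg_erase {A : Finset (Sym2 (Vtx m n))} {e : Sym2 (Vtx m n)} (he : e ∈ A)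
    (x : Vtx m n) : Odd (bdeg m n (A.erase e) x) ↔ (Odd (bdeg m n A x) ↔ x ∉ e) := by
  rw [bdeg_erase he x]
  split_ifs with hx <;> simp [hx, Nat.odd_add_one]

section

variable [NeZero m] [NeZero n]

lemma color_eq_zero_iff (x : Vtx m n) : color x = 0 ↔ Even (x.1.val + x.2.val) := by
  rw [color, ZMod.cast_eq_val, ZMod.cast_eq_val, ← Nat.cast_add, ZMod.natCast_eq_zero_iff_even]

lemma honeyAdj_iff (hn : Even n) {x y : Vtx m n} :
    HoneyAdj m n x y ↔ y = rightNbr x ∨ y = leftNbr x ∨ y = vertNbr x := by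
  have hdown : color (x.1, x.2 - 1) = 0 ↔ color x ≠ 0 := by
    have h := color_add_one_snd hn (x.1, x.2 - 1)
    rw [sub_add_cancel] at h
    rw [h]
    generalize color _ = c
    revert c; decide
  constructor
  · simp only [HoneyAdj, rightNbr, leftNbr, vertNbr, ← color_eq_zero_iff, Prod.ext_iff]
    rintro (⟨h1, h2 | h2⟩ | ⟨h1, ⟨h2, hx⟩ | ⟨h2, hy⟩⟩)
    · exact .inl ⟨h2, h1.symm⟩
    · exact .inr (.inl ⟨by rw [h2]; ring, h1.symm⟩)
    · exact .inr (.inr (by simp [hx, h1, h2]))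
    · have hy' : y = (x.1, x.2 - 1) := Prod.ext h1.symm (by rw [h2]; ring)
      simp [hdown.1 (hy' ▸ hy), hy']
  · rintro (rfl | rfl | rfl)
    · exact .inl ⟨rfl, .inl rfl⟩
    · exact .inl ⟨rfl, .inr (by simp [leftNbr])⟩
    · unfold vertNbr
      split_ifs with hc
      · exact .inr ⟨rfl, .inl ⟨rfl, (color_eq_zero_iff x).1 hc⟩⟩
      · exact .inr ⟨rfl, .inr ⟨by simp, (color_eq_zero_iff _).1 (hdown.2 hc)⟩⟩

lemma HoneyAdj.ne (hm : Even m) (hn : Even n) {x y : Vtx m n} (h : HoneyAdj m n x y) :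
    y ≠ x := by
  rcases (honeyAdj_iff hn).1 h with rfl | rfl | rfl
  exacts [rightNbr_ne_self hm x, leftNbr_ne_self hm x, vertNbr_ne_self hn x]

lemma honeyAdj_rightNbr (hn : Even n) (x : Vtx m n) : HoneyAdj m n x (rightNbr x) :=
  (honeyAdj_iff hn).2 (.inl rfl)

lemma honeyAdj_vertNbr (hn : Even n) (x : Vtx m n) : HoneyAdj m n x (vertNbr x) :=
  (honeyAdj_iff hn).2 (.inr (.inr rfl))

lemma mk_mem_honeyEdges {x y : Vtx m n} : s(x, y) ∈ honeyEdges m n ↔ HoneyAdj m n x y := by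
  simp only [honeyEdges, mem_image, mem_filter, mem_univ, true_and]
  constructor
  · rintro ⟨⟨a, b⟩, hab, he⟩
    rcases Sym2.eq_iff.1 he with ⟨rfl, rfl⟩ | ⟨rfl, rfl⟩
    exacts [hab, honeyAdj_symm hab]
  · exact fun h => ⟨(x, y), h, rfl⟩

lemma bdeg_eq_ite (hm : Even m) (hn : Even n) (hm2 : 2 < m) {A : Finset (Sym2 (Vtx m n))}
    (hA : A ⊆ honeyEdges m n) (x : Vtx m n) :
    bdeg m n A x = (if s(x, rightNbr x) ∈ A then 1 else 0) +
      (if s(x, leftNbr x) ∈ A then 1 else 0) + (if s(x, vertNbr x) ∈ A then 1 else 0) := by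
  have hinc : A.filter (x ∈ ·) =
      ({s(x, rightNbr x), s(x, leftNbr x), s(x, vertNbr x)} : Finset _).filter (· ∈ A) := by
    ext e
    simp only [mem_filter, mem_insert, mem_singleton]
    constructor
    · rintro ⟨he, hx⟩
      obtain ⟨y, rfl⟩ := Sym2.mem_iff_exists.1 hx
      rcases (honeyAdj_iff hn).1 (mk_mem_honeyEdges.1 (hA he)) with rfl | rfl | rfl <;>
        simp [he]
    · rintro ⟨h | h | h, he⟩ <;> exact ⟨he, h ▸ Sym2.mem_mk_left _ _⟩
  rw [bdeg, hinc, card_filter, sum_insert, sum_insert, sum_singleton, add_assoc]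
  · rw [mem_singleton, Sym2.congr_right]
    exact (vertNbr_ne_leftNbr hm x).symm
  · rw [mem_insert, mem_singleton, Sym2.congr_right, Sym2.congr_right, not_or]
    exact ⟨rightNbr_ne_leftNbr hm2 x, (vertNbr_ne_rightNbr hm x).symm⟩

lemma mk_mem_Hconfig {x y : Vtx m n} :
    s(x, y) ∈ Hconfig m n ↔ y = rightNbr x ∨ y = leftNbr x := by
  simp only [Hconfig, mem_image, mem_univ, true_and, Sym2.eq_iff]
  constructor
  · rintro ⟨p, ⟨rfl, rfl⟩ | ⟨rfl, h⟩⟩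
    exacts [.inl rfl, .inr ((rightNbr_eq_iff _ _).1 h)]
  · rintro (rfl | rfl)
    exacts [⟨x, .inl ⟨rfl, rfl⟩⟩, ⟨leftNbr x, .inr ⟨rfl, (rightNbr_eq_iff _ _).2 rfl⟩⟩]

lemma Hconfig_subset_honeyEdges (hn : Even n) : Hconfig m n ⊆ honeyEdges m n := by
  intro e he
  obtain ⟨p, -, rfl⟩ := mem_image.1 he
  exact mk_mem_honeyEdges.2 ((honeyAdj_iff hn).2 (.inl rfl))

lemma HoneyAdj.of_mk_mem_Hconfig (hn : Even n) {x y : Vtx m n} (h : s(x, y) ∈ Hconfig m n) :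
    HoneyAdj m n x y :=
  mk_mem_honeyEdges.1 (Hconfig_subset_honeyEdges hn h)

lemma mk_vertNbr_notMem_Hconfig (hm : Even m) (x : Vtx m n) : s(x, vertNbr x) ∉ Hconfig m n := by
  rw [mk_mem_Hconfig, not_or]
  exact ⟨vertNbr_ne_rightNbr hm x, vertNbr_ne_leftNbr hm x⟩

lemma bdeg_Hconfig (hm : Even m) (hn : Even n) (hm2 : 2 < m) (x : Vtx m n) :
    bdeg m n (Hconfig m n) x = 2 := by
  rw [bdeg_eq_ite hm hn hm2 (Hconfig_subset_honeyEdges hn), if_pos (mk_mem_Hconfig.2 (.inl rfl)),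
    if_pos (mk_mem_Hconfig.2 (.inr rfl)), if_neg]
  rw [mk_mem_Hconfig, not_or]
  exact ⟨vertNbr_ne_rightNbr hm x, vertNbr_ne_leftNbr hm x⟩

def MissesHEdge (A : Finset (Sym2 (Vtx m n))) (x : Vtx m n) : Prop :=
  ∃ y, s(x, y) ∈ Hconfig m n ∧ s(x, y) ∉ A

lemma bdeg_le_three (hm : Even m) (hn : Even n) (hm2 : 2 < m) {A : Finset (Sym2 (Vtx m n))}
    (hA : A ⊆ honeyEdges m n) (x : Vtx m n) : bdeg m n A x ≤ 3 := by
  rw [bdeg_eq_ite hm hn hm2 hA]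
  split_ifs <;> omega

lemma mk_mem_of_not_missesHEdge {A : Finset (Sym2 (Vtx m n))} {x : Vtx m n}
    (hx : ¬ MissesHEdge A x) : s(x, rightNbr x) ∈ A ∧ s(x, leftNbr x) ∈ A :=
  ⟨by_contra fun h => hx ⟨_, mk_mem_Hconfig.2 (.inl rfl), h⟩,
    by_contra fun h => hx ⟨_, mk_mem_Hconfig.2 (.inr rfl), h⟩⟩

lemma bdeg_eq_of_not_missesHEdge (hm : Even m) (hn : Even n) (hm2 : 2 < m)
    {A : Finset (Sym2 (Vtx m n))} (hA : A ⊆ honeyEdges m n) {x : Vtx m n}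
    (hx : ¬ MissesHEdge A x) : bdeg m n A x = 2 + if s(x, vertNbr x) ∈ A then 1 else 0 := by
  rw [bdeg_eq_ite hm hn hm2 hA, if_pos (mk_mem_of_not_missesHEdge hx).1,
    if_pos (mk_mem_of_not_missesHEdge hx).2]

lemma missesHEdge_of_bdeg_lt_two (hm : Even m) (hn : Even n) (hm2 : 2 < m)
    {A : Finset (Sym2 (Vtx m n))} (hA : A ⊆ honeyEdges m n) {x : Vtx m n}
    (hx : bdeg m n A x < 2) : MissesHEdge A x := by
  by_contra hmiss
  rw [bdeg_eq_of_not_missesHEdge hm hn hm2 hA hmiss] at hx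
  omega

lemma bdeg_eq_two_of_not_missesHEdge (hm : Even m) (hn : Even n) (hm2 : 2 < m)
    {A : Finset (Sym2 (Vtx m n))} (hA : A ⊆ honeyEdges m n) {x : Vtx m n}
    (heven : Even (bdeg m n A x)) (hx : ¬ MissesHEdge A x) :
    bdeg m n A x = 2 ∧ s(x, vertNbr x) ∉ A := by
  rw [bdeg_eq_of_not_missesHEdge hm hn hm2 hA hx] at heven ⊢
  split_ifs at heven ⊢ with hv
  · exact absurd heven (by decide)
  · exact ⟨rfl, hv⟩

lemma mk_vertNbr_mem_of_bdeg_eq_three (hm : Even m) (hn : Even n) (hm2 : 2 < m)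
    {A : Finset (Sym2 (Vtx m n))} (hA : A ⊆ honeyEdges m n) {x : Vtx m n}
    (hx : bdeg m n A x = 3) : s(x, vertNbr x) ∈ A := by
  by_contra hv
  rw [bdeg_eq_ite hm hn hm2 hA, if_neg hv] at hx
  split_ifs at hx <;> omega

/-! ### Worm moves and the transition matrix -/

lemma IsWormState.swap {A : Finset (Sym2 (Vtx m n))} {u v : Vtx m n}
    (h : IsWormState m n A u v) : IsWormState m n A v u :=
  ⟨h.1, fun x => by rw [h.2 x, or_comm, ne_comm]⟩

/-- `hodd` says that `B` is `A` with the edge `s(u, w)` toggled. -/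
lemma IsWormState.toggle {A B : Finset (Sym2 (Vtx m n))} {u v w : Vtx m n}
    (h : IsWormState m n A u v) (hwu : w ≠ u) (hB : B ⊆ honeyEdges m n)
    (hodd : ∀ x, Odd (bdeg m n B x) ↔ (Odd (bdeg m n A x) ↔ x ∉ s(u, w))) :
    IsWormState m n B w v := by
  refine ⟨hB, fun x => ?_⟩
  rw [hodd, h.2, Sym2.mem_iff]
  grind

lemma IsWormState.even_bdeg {A : Finset (Sym2 (Vtx m n))} {v : Vtx m n}
    (h : IsWormState m n A v v) (x : Vtx m n) : Even (bdeg m n A x) := by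
  rw [← Nat.not_odd_iff_even, h.2]
  simp

lemma IsWormState.relocate {A : Finset (Sym2 (Vtx m n))} {v : Vtx m n}
    (h : IsWormState m n A v v) (w : Vtx m n) : IsWormState m n A w w :=
  ⟨h.1, fun x => by simpa using h.2 x⟩

abbrev Worm (m n : ℕ) := Finset (Sym2 (Vtx m n)) × Vtx m n × Vtx m n

def Worm.swapEnds (p : Worm m n) : Worm m n := (p.1, p.2.2, p.2.1)

/-- The moves of the head `u` of a worm `(A, u, v)` that have positive probability under
`Pinf`; the moves of the tail are the head moves of the reversed worm. -/
inductive HeadMove : Worm m n → Worm m n → Prop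
  | start {A v w} : HoneyAdj m n v w → s(v, w) ∉ A → HeadMove (A, v, v) (insert s(v, w) A, w, v)
  | grow {A u v w} : u ≠ v → bdeg m n A u = 1 → HoneyAdj m n u w → s(u, w) ∉ A →
      HeadMove (A, u, v) (insert s(u, w) A, w, v)
  | shrink {A u v w} : u ≠ v → bdeg m n A u = 3 → HoneyAdj m n u w → s(u, w) ∈ A →
      HeadMove (A, u, v) (A.erase s(u, w), w, v)

def WormMove (p q : Worm m n) : Prop := HeadMove p q ∨ HeadMove p.swapEnds q.swapEnds

lemma HeadMove.isWormState (hm : Even m) (hn : Even n) {p q : Worm m n} (h : HeadMove p q)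
    (hp : IsWormState m n p.1 p.2.1 p.2.2) : IsWormState m n q.1 q.2.1 q.2.2 := by
  obtain ⟨A, u, v⟩ := p
  cases h with
  | start huw he | grow _ _ huw he =>
    exact hp.toggle (huw.ne hm hn) (insert_subset (mk_mem_honeyEdges.2 huw) hp.1)
      (odd_bdeg_insert he)
  | shrink _ _ huw he =>
    exact hp.toggle (huw.ne hm hn) ((erase_subset _ _).trans hp.1) (odd_bdeg_erase he)

lemma WormMove.isWormState (hm : Even m) (hn : Even n) {p q : Worm m n} (h : WormMove p q)
    (hp : IsWormState m n p.1 p.2.1 p.2.2) : IsWormState m n q.1 q.2.1 q.2.2 := by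
  rcases h with h | h
  · exact h.isWormState hm hn hp
  · exact (h.isWormState hm hn hp.swap).swap

lemma isWormState_of_reflTransGen (hm : Even m) (hn : Even n) {p q : Worm m n}
    (hp : IsWormState m n p.1 p.2.1 p.2.2) (h : ReflTransGen WormMove p q) :
    IsWormState m n q.1 q.2.1 q.2.2 := by
  induction h with
  | refl => exact hp
  | tail _ hmove ih => exact hmove.isWormState hm hn ih

lemma pinf_nonneg (s t : WormState m n) : 0 ≤ Pinf m n s t := by
  unfold Pinf
  split_ifs <;> positivity

lemma pinf_pos_of_wormMove {s t : WormState m n} (h : WormMove s.1 t.1) : 0 < Pinf m n s t := by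
  obtain ⟨⟨A, u, v⟩, hs⟩ := s
  obtain ⟨⟨B, p, q⟩, ht⟩ := t
  unfold WormMove Worm.swapEnds at h
  unfold Pinf
  dsimp only at h ⊢
  rcases h with h | h
  · cases h with
    | start hvw he =>
      rw [if_pos rfl]
      exact add_pos_of_nonneg_of_pos (by positivity)
        (pos_ite_zero ⟨_, hvw, he, rfl, .inl ⟨rfl, rfl⟩⟩ (by norm_num))
    | grow huv hdeg huw he =>
      rw [if_neg huv]
      refine add_four_pos (by positivity) (by positivity) (by positivity) (by positivity) ?_
      exact .inr (.inl (pos_ite_zero ⟨hdeg, _, huw, he, rfl, rfl, rfl⟩ (by norm_num)))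
    | shrink huv hdeg huw he =>
      rw [if_neg huv]
      refine add_four_pos (by positivity) (by positivity) (by positivity) (by positivity) ?_
      exact .inl (pos_ite_zero ⟨hdeg, _, huw, he, rfl, rfl, rfl⟩ (by norm_num))
  · cases h with
    | start hvw he =>
      rw [if_pos rfl]
      exact add_pos_of_nonneg_of_pos (by positivity)
        (pos_ite_zero ⟨_, hvw, he, rfl, .inr ⟨rfl, rfl⟩⟩ (by norm_num))
    | grow hvu hdeg hvw he =>
      rw [if_neg hvu.symm]
      refine add_four_pos (by positivity) (by positivity) (by positivity) (by positivity) ?_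
      exact .inr (.inr (.inr (pos_ite_zero ⟨hdeg, _, hvw, he, rfl, rfl, rfl⟩ (by norm_num))))
    | shrink hvu hdeg hvw he =>
      rw [if_neg hvu.symm]
      refine add_four_pos (by positivity) (by positivity) (by positivity) (by positivity) ?_
      exact .inr (.inr (.inl (pos_ite_zero ⟨hdeg, _, hvw, he, rfl, rfl, rfl⟩ (by norm_num))))

lemma eq_or_wormMove_of_pinf_pos {s t : WormState m n} (h : 0 < Pinf m n s t) :
    t = s ∨ WormMove s.1 t.1 := by
  by_contra hst
  obtain ⟨hts, hmove⟩ := not_or.1 hst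
  obtain ⟨⟨A, u, v⟩, hs⟩ := s
  obtain ⟨⟨B, p, q⟩, ht⟩ := t
  unfold WormMove Worm.swapEnds at hmove
  unfold Pinf at h
  dsimp only at h hmove
  refine h.ne' ?_
  by_cases huv : u = v
  · subst huv
    rw [if_pos rfl, if_neg hts, if_neg, add_zero]
    rintro ⟨w, hvw, he, rfl, ⟨rfl, rfl⟩ | ⟨rfl, rfl⟩⟩
    exacts [hmove (.inl (.start hvw he)), hmove (.inr (.start hvw he))]
  · rw [if_neg huv, if_neg, if_neg, if_neg, if_neg, add_zero, add_zero, add_zero]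
    all_goals rintro ⟨hdeg, w, hw, he, rfl, rfl, rfl⟩
    exacts [hmove (.inr (.grow (Ne.symm huv) hdeg hw he)),
      hmove (.inr (.shrink (Ne.symm huv) hdeg hw he)), hmove (.inl (.grow huv hdeg hw he)),
      hmove (.inl (.shrink huv hdeg hw he))]

lemma reaches_iff_reflTransGen {s t : WormState m n} :
    Reaches m n s t ↔ ReflTransGen (fun a b => 0 < Pinf m n a b) s t :=
  Matrix.exists_pow_apply_pos_iff_reflTransGen pinf_nonneg

lemma exists_reaches_of_reflTransGen (hm : Even m) (hn : Even n) {p q : Worm m n}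
    (hp : IsWormState m n p.1 p.2.1 p.2.2) (h : ReflTransGen WormMove p q) :
    ∃ hq : IsWormState m n q.1 q.2.1 q.2.2, Reaches m n ⟨p, hp⟩ ⟨q, hq⟩ := by
  induction h with
  | refl => exact ⟨hp, reaches_iff_reflTransGen.2 .refl⟩
  | tail _ hmove ih =>
    obtain ⟨hr, hreach⟩ := ih
    exact ⟨hmove.isWormState hm hn hr,
      reaches_iff_reflTransGen.2 ((reaches_iff_reflTransGen.1 hreach).tail
        (pinf_pos_of_wormMove hmove))⟩

/-! ### Every worm reaches a closed worm on `H` -/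

noncomputable def distH (A : Finset (Sym2 (Vtx m n))) : ℕ := #(symmDiff A (Hconfig m n))

lemma distH_insert {A : Finset (Sym2 (Vtx m n))} {e : Sym2 (Vtx m n)} (heH : e ∈ Hconfig m n)
    (heA : e ∉ A) : distH (insert e A) + 1 = distH A := by
  have hsd : symmDiff (insert e A) (Hconfig m n) = (symmDiff A (Hconfig m n)).erase e := by
    ext f
    by_cases hf : f = e
    · subst hf; simp [mem_symmDiff, heH]
    · simp [mem_symmDiff, hf]
  rw [distH, distH, hsd, card_erase_add_one (by simp [mem_symmDiff, heH, heA])]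

lemma distH_erase {A : Finset (Sym2 (Vtx m n))} {e : Sym2 (Vtx m n)} (heH : e ∉ Hconfig m n)
    (heA : e ∈ A) : distH (A.erase e) + 1 = distH A := by
  have hsd : symmDiff (A.erase e) (Hconfig m n) = (symmDiff A (Hconfig m n)).erase e := by
    ext f
    by_cases hf : f = e
    · subst hf; simp [mem_symmDiff, heH]
    · simp [mem_symmDiff, hf]
  rw [distH, distH, hsd, card_erase_add_one (by simp [mem_symmDiff, heH, heA])]

lemma exists_headMove_distH_succ (hm : Even m) (hn : Even n) (hm2 : 2 < m)
    {A : Finset (Sym2 (Vtx m n))} {u v : Vtx m n} (h : IsWormState m n A u v) (huv : u ≠ v) :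
    ∃ B w, HeadMove (A, u, v) (B, w, v) ∧ distH B + 1 = distH A := by
  have hodd : Odd (bdeg m n A u) := (h.2 u).2 ⟨.inl rfl, huv⟩
  have hle := bdeg_le_three hm hn hm2 h.1 u
  obtain h1 | h3 : bdeg m n A u = 1 ∨ bdeg m n A u = 3 := by
    obtain ⟨k, hk⟩ := hodd; omega
  · obtain ⟨w, hwH, hwA⟩ := missesHEdge_of_bdeg_lt_two hm hn hm2 h.1 (x := u) (by omega)
    exact ⟨_, w, .grow huv h1 (.of_mk_mem_Hconfig hn hwH) hwA, distH_insert hwH hwA⟩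
  · have hv := mk_vertNbr_mem_of_bdeg_eq_three hm hn hm2 h.1 h3
    exact ⟨_, _, .shrink huv h3 (honeyAdj_vertNbr hn u) hv,
      distH_erase (mk_vertNbr_notMem_Hconfig hm u) hv⟩

lemma exists_closed_distH_lt_of_ne (hm : Even m) (hn : Even n) (hm2 : 2 < m)
    {A : Finset (Sym2 (Vtx m n))} {u v : Vtx m n} (h : IsWormState m n A u v) (huv : u ≠ v) :
    ∃ B w, ReflTransGen WormMove (A, u, v) (B, w, w) ∧ distH B < distH A := by
  induction hd : distH A using Nat.strong_induction_on generalizing A u with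
  | _ d ih =>
  obtain ⟨B, w, hmove, hB⟩ := exists_headMove_distH_succ hm hn hm2 h huv
  by_cases hwv : w = v
  · subst hwv
    exact ⟨B, w, .single (.inl hmove), by omega⟩
  · obtain ⟨C, z, hC, hlt⟩ :=
      ih (distH B) (by omega) (A := B) (u := w) (hmove.isWormState hm hn h) hwv rfl
    exact ⟨C, z, .head (.inl hmove) hC, by omega⟩

lemma exists_closed_distH_lt_of_missesHEdge (hm : Even m) (hn : Even n) (hm2 : 2 < m)
    {A : Finset (Sym2 (Vtx m n))} {v : Vtx m n} (h : IsWormState m n A v v)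
    (hv : MissesHEdge A v) :
    ∃ B w, ReflTransGen WormMove (A, v, v) (B, w, w) ∧ distH B < distH A := by
  obtain ⟨w, hwH, hwA⟩ := hv
  have hmove : HeadMove (A, v, v) (insert s(v, w) A, w, v) :=
    .start (.of_mk_mem_Hconfig hn hwH) hwA
  obtain ⟨B, z, hB, hlt⟩ := exists_closed_distH_lt_of_ne hm hn hm2 (A := insert s(v, w) A)
    (u := w) (hmove.isWormState hm hn h) ((HoneyAdj.of_mk_mem_Hconfig hn hwH).ne hm hn)
  exact ⟨B, z, .head (.inl hmove) hB, by have := distH_insert hwH hwA; omega⟩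

lemma reflTransGen_slide_of_notMem (hm : Even m) (hn : Even n) {A : Finset (Sym2 (Vtx m n))}
    {v z : Vtx m n} (hv : bdeg m n A v = 2) (hvz : HoneyAdj m n v z) (he : s(v, z) ∉ A) :
    ReflTransGen WormMove (A, v, v) (A, z, z) := by
  have hstart : HeadMove (A, v, v) (insert s(v, z) A, z, v) := .start hvz he
  have hclose : HeadMove (insert s(v, z) A, v, z) ((insert s(v, z) A).erase s(v, z), z, z) :=
    .shrink (hvz.ne hm hn).symm (by rw [bdeg_insert he, if_pos (Sym2.mem_mk_left _ _), hv])
      hvz (mem_insert_self _ _)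
  rw [erase_insert he] at hclose
  exact .tail (.single (.inl hstart)) (.inr hclose)

/-- Open along the free edge `s(v, y)`, let the tail remove `s(v, x)`, let the head remove
`s(v, y)` and then add `s(v, x)` back. -/
lemma reflTransGen_slide_of_mem (hm : Even m) (hn : Even n) {A : Finset (Sym2 (Vtx m n))}
    {v x y : Vtx m n} (hv : bdeg m n A v = 2) (hvx : HoneyAdj m n v x) (hex : s(v, x) ∈ A)
    (hvy : HoneyAdj m n v y) (hey : s(v, y) ∉ A) (hy : bdeg m n A y = 2) (hxy : x ≠ y) :
    ReflTransGen WormMove (A, v, v) (A, x, x) := by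
  have hxv := hvx.ne hm hn
  have hyv := hvy.ne hm hn
  set B := (insert s(v, y) A).erase s(v, x) with hBdef
  have hyx : y ∉ s(v, x) := by simp [hyv, hxy.symm]
  have h1 : HeadMove (A, v, v) (insert s(v, y) A, y, v) := .start hvy hey
  have h2 : HeadMove (insert s(v, y) A, v, y) (B, x, y) :=
    .shrink hyv.symm (by rw [bdeg_insert hey, if_pos (Sym2.mem_mk_left _ _), hv]) hvx
      (mem_insert_of_mem hex)
  have h3 : HeadMove (B, y, x) (B.erase s(y, v), v, x) := by
    refine .shrink hxy.symm ?_ (honeyAdj_symm hvy) ?_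
    · have e1 := bdeg_erase (mem_insert_of_mem hex : s(v, x) ∈ insert s(v, y) A) y
      have e2 := bdeg_insert hey y
      rw [if_neg hyx, ← hBdef] at e1
      rw [if_pos (Sym2.mem_mk_right _ _)] at e2
      omega
    · rw [Sym2.eq_swap]
      exact mem_erase.2 ⟨by rwa [Ne, Sym2.congr_right, eq_comm], mem_insert_self _ _⟩
  have hB : B.erase s(y, v) = A.erase s(v, x) := by
    rw [Sym2.eq_swap, erase_right_comm, erase_insert hey]
  rw [hB] at h3
  have h4 : HeadMove (A.erase s(v, x), v, x) (insert s(v, x) (A.erase s(v, x)), x, x) := by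
    refine .grow hxv.symm ?_ hvx (notMem_erase _ _)
    have := bdeg_erase hex v
    rw [if_pos (Sym2.mem_mk_left _ _), hv] at this
    omega
  rw [insert_erase hex] at h4
  have h2' : WormMove (insert s(v, y) A, y, v) (B, y, x) := .inr h2
  exact (((ReflTransGen.single (.inl h1)).tail h2').tail (.inl h3)).tail (.inl h4)

/-- A closed worm at `v` is steered towards `t` by walking right along the row of `t`; in any
other row it climbs, going up at sites of colour `0` and right at the others, whose vertical
edge points down. -/
def navDist (t v : Vtx m n) : ℕ :=
  if v.2 = t.2 then (t.1 - v.1).val else m * (t.2 - v.2).val + if color v = 0 then 0 else 1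

lemma exists_navDist_lt (hm : Even m) {t v : Vtx m n} (hvt : v ≠ t) :
    ∃ w, (w = rightNbr v ∨ w = vertNbr v) ∧ navDist t w < navDist t v := by
  by_cases hrow : v.2 = t.2
  · have h1 : t.1 - v.1 ≠ 0 := sub_ne_zero.2 fun h => hvt (Prod.ext h.symm hrow)
    refine ⟨rightNbr v, .inl rfl, ?_⟩
    dsimp only [navDist, rightNbr]
    rw [if_pos hrow, if_pos hrow, show t.1 - (v.1 + 1) = t.1 - v.1 - 1 by ring,
      ZMod.val_sub_one_of_ne_zero h1]
    have := ZMod.val_pos.2 h1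
    omega
  · have hd : t.2 - v.2 ≠ 0 := sub_ne_zero.2 (Ne.symm hrow)
    have hdpos := ZMod.val_pos.2 hd
    have hm2 : 2 ≤ m := by obtain ⟨k, hk⟩ := hm; have := NeZero.ne m; omega
    by_cases hc : color v = 0
    · refine ⟨vertNbr v, .inr rfl, ?_⟩
      simp only [navDist, vertNbr, if_pos hc, if_neg hrow, add_zero]
      split_ifs with hup
      · exact (ZMod.val_lt _).trans_le (Nat.le_mul_of_pos_right m hdpos)
      all_goals
        rw [show t.2 - (v.2 + 1) = t.2 - v.2 - 1 by ring, ZMod.val_sub_one_of_ne_zero hd]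
        have : m * ((t.2 - v.2).val - 1) + m = m * (t.2 - v.2).val := by
          rw [← Nat.mul_succ]; congr 1; omega
        omega
    · refine ⟨rightNbr v, .inl rfl, ?_⟩
      have hc' : color (rightNbr v) = 0 := by
        rw [color_rightNbr hm, ZMod.add_one_eq_of_ne hc]
      simp only [navDist, if_neg hrow, if_neg hc, hc', if_pos]
      simp [rightNbr, hrow]

lemma exists_closed_distH_lt_of_exists_missesHEdge (hm : Even m) (hn : Even n) (hm2 : 2 < m)
    {A : Finset (Sym2 (Vtx m n))} {v : Vtx m n} (h : IsWormState m n A v v)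
    (ht : ∃ t, MissesHEdge A t) :
    ∃ B w, ReflTransGen WormMove (A, v, v) (B, w, w) ∧ distH B < distH A := by
  obtain ⟨t, ht⟩ := ht
  induction hd : navDist t v using Nat.strong_induction_on generalizing v with
  | _ d ih =>
  by_cases hv : MissesHEdge A v
  · exact exists_closed_distH_lt_of_missesHEdge hm hn hm2 h hv
  have hvt : v ≠ t := by rintro rfl; exact hv ht
  obtain ⟨hv2, hvert⟩ := bdeg_eq_two_of_not_missesHEdge hm hn hm2 h.1 (h.even_bdeg v) hv
  have hslide := reflTransGen_slide_of_notMem hm hn hv2 (honeyAdj_vertNbr hn v) hvert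
  obtain ⟨w, rfl | rfl, hlt⟩ := exists_navDist_lt hm hvt
  · have hr := (mk_mem_of_not_missesHEdge hv).1
    obtain hy | hy : bdeg m n A (vertNbr v) < 2 ∨ bdeg m n A (vertNbr v) = 2 := by
      have := bdeg_le_three hm hn hm2 h.1 (vertNbr v)
      obtain ⟨k, hk⟩ := h.even_bdeg (vertNbr v)
      omega
    · obtain ⟨B, w, hB, hlt'⟩ := exists_closed_distH_lt_of_missesHEdge hm hn hm2 (h.relocate _)
        (missesHEdge_of_bdeg_lt_two hm hn hm2 h.1 hy)
      exact ⟨B, w, hslide.trans hB, hlt'⟩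
    · obtain ⟨B, w, hB, hlt'⟩ := ih _ (hd ▸ hlt) (h.relocate (rightNbr v)) rfl
      refine ⟨B, w, .trans ?_ hB, hlt'⟩
      exact reflTransGen_slide_of_mem hm hn hv2 (honeyAdj_rightNbr hn v) hr
        (honeyAdj_vertNbr hn v) hvert hy (vertNbr_ne_rightNbr hm v).symm
  · obtain ⟨B, w, hB, hlt'⟩ := ih _ (hd ▸ hlt) (h.relocate (vertNbr v)) rfl
    exact ⟨B, w, hslide.trans hB, hlt'⟩

lemma exists_missesHEdge (hm : Even m) (hn : Even n) (hm2 : 2 < m)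
    {A : Finset (Sym2 (Vtx m n))} {v : Vtx m n} (h : IsWormState m n A v v)
    (hA : A ≠ Hconfig m n) : ∃ t, MissesHEdge A t := by
  by_contra! hnone
  refine hA (Finset.ext fun e => ⟨fun he => ?_, fun he => ?_⟩)
  · induction e using Sym2.ind with
    | _ x y =>
    rcases (honeyAdj_iff hn).1 (mk_mem_honeyEdges.1 (h.1 he)) with rfl | rfl | rfl
    · exact mk_mem_Hconfig.2 (.inl rfl)
    · exact mk_mem_Hconfig.2 (.inr rfl)
    · exact absurd he
        (bdeg_eq_two_of_not_missesHEdge hm hn hm2 h.1 (h.even_bdeg x) (hnone x)).2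
  · obtain ⟨p, -, rfl⟩ := mem_image.1 he
    by_contra hp
    exact hnone p ⟨_, he, hp⟩

lemma exists_reflTransGen_Hconfig_of_closed (hm : Even m) (hn : Even n) (hm2 : 2 < m)
    {A : Finset (Sym2 (Vtx m n))} {v : Vtx m n} (h : IsWormState m n A v v) :
    ∃ w, ReflTransGen WormMove (A, v, v) (Hconfig m n, w, w) := by
  induction hd : distH A using Nat.strong_induction_on generalizing A v with
  | _ d ih =>
  by_cases hA : A = Hconfig m n
  · subst hA
    exact ⟨v, .refl⟩
  obtain ⟨B, w, hB, hlt⟩ := exists_closed_distH_lt_of_exists_missesHEdge hm hn hm2 h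
    (exists_missesHEdge hm hn hm2 h hA)
  obtain ⟨z, hz⟩ := ih _ (hd ▸ hlt) (A := B) (v := w)
    (isWormState_of_reflTransGen hm hn h hB) rfl
  exact ⟨z, hB.trans hz⟩

lemma exists_reflTransGen_Hconfig (hm : Even m) (hn : Even n) (hm2 : 2 < m) {p : Worm m n}
    (hp : IsWormState m n p.1 p.2.1 p.2.2) :
    ∃ w, ReflTransGen WormMove p (Hconfig m n, w, w) := by
  obtain ⟨A, u, v⟩ := p
  by_cases huv : u = v
  · subst huv
    exact exists_reflTransGen_Hconfig_of_closed hm hn hm2 hp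
  · obtain ⟨B, w, hB, -⟩ := exists_closed_distH_lt_of_ne hm hn hm2 hp huv
    obtain ⟨z, hz⟩ := exists_reflTransGen_Hconfig_of_closed hm hn hm2
      (isWormState_of_reflTransGen hm hn hp hB)
    exact ⟨z, hB.trans hz⟩

/-! ### States reachable from `H` have no isolated vertex -/

lemma sum_bdeg_color (hm : Even m) (hn : Even n) {A : Finset (Sym2 (Vtx m n))}
    (hA : A ⊆ honeyEdges m n) (c : ZMod 2) :
    ∑ x ∈ univ.filter (fun x : Vtx m n => color x = c), bdeg m n A x = #A := by
  simp only [bdeg, card_filter]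
  rw [sum_comm, card_eq_sum_ones]
  refine sum_congr rfl fun e he => ?_
  induction e using Sym2.ind with
  | _ a b =>
  have hab := mk_mem_honeyEdges.1 (hA he)
  have hb := color_eq_add_one_of_honeyAdj hm hn hab
  have hends : univ.filter (fun x => color x = c ∧ x ∈ s(a, b)) =
      ({a, b} : Finset _).filter (color · = c) := by
    ext
    simp [and_comm]
  rw [← card_filter, filter_filter, hends, filter_insert, filter_singleton, hb]
  by_cases hc : color a = c
  · subst hc
    simp
  · simp [hc, ZMod.add_one_eq_of_ne hc]

lemma card_filter_color_add_one (hm : Even m) (c : ZMod 2) :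
    #(univ.filter fun x : Vtx m n => color x = c + 1) =
      #(univ.filter fun x : Vtx m n => color x = c) := by
  refine (card_nbij' leftNbr rightNbr ?_ ?_ ?_ ?_).symm
  · intro x hx
    simp only [coe_filter, mem_univ, true_and, Set.mem_ofPred_eq] at hx ⊢
    rw [color_leftNbr hm, hx]
  · intro x hx
    simp only [coe_filter, mem_univ, true_and, Set.mem_ofPred_eq] at hx ⊢
    rw [color_rightNbr hm, hx, CharTwo.add_cancel_right]
  · exact fun x _ => rightNbr_leftNbr x
  · exact fun x _ => leftNbr_rightNbr x

lemma bdeg_add_two_mul_eq_card (hm : Even m) (hn : Even n) {A : Finset (Sym2 (Vtx m n))}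
    (hA : A ⊆ honeyEdges m n) {u v : Vtx m n} (hcol : color v ≠ color u)
    (h2 : ∀ x, x ≠ u → x ≠ v → bdeg m n A x = 2) :
    bdeg m n A u + 2 * (#(univ.filter fun x : Vtx m n => color x = color u) - 1) = #A := by
  have hu : u ∈ univ.filter fun x : Vtx m n => color x = color u := by simp
  rw [← sum_bdeg_color hm hn hA (color u), ← add_sum_erase _ _ hu,
    sum_congr rfl fun x hx => h2 x (ne_of_mem_erase hx) ?_, sum_const, card_erase_of_mem hu,
    smul_eq_mul, mul_comm]
  rintro rfl
  exact hcol (mem_filter.1 (mem_of_mem_erase hx)).2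

lemma bdeg_eq_of_honeyAdj (hm : Even m) (hn : Even n) {A : Finset (Sym2 (Vtx m n))}
    (hA : A ⊆ honeyEdges m n) {u v : Vtx m n} (huv : HoneyAdj m n u v)
    (h2 : ∀ x, x ≠ u → x ≠ v → bdeg m n A x = 2) : bdeg m n A u = bdeg m n A v := by
  have hcol := color_eq_add_one_of_honeyAdj hm hn huv
  have hu := bdeg_add_two_mul_eq_card hm hn hA (u := u) (v := v) (by simp [hcol]) h2
  have hv := bdeg_add_two_mul_eq_card hm hn hA (u := v) (v := u) (by simp [hcol])
    fun x hxv hxu => h2 x hxu hxv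
  rw [hcol, card_filter_color_add_one hm] at hv
  omega

def Worm.IsTwoRegularOffEnds (p : Worm m n) : Prop :=
  ∀ x, bdeg m n p.1 x = 2 ∨ (x = p.2.1 ∨ x = p.2.2) ∧ p.2.1 ≠ p.2.2

end

lemma Worm.IsTwoRegularOffEnds.swapEnds {p : Worm m n} (h : p.IsTwoRegularOffEnds) :
    p.swapEnds.IsTwoRegularOffEnds := fun x => by
  simpa only [Worm.swapEnds, or_comm (a := x = p.2.1), ne_comm] using h x

lemma Worm.IsTwoRegularOffEnds.toggle {A B : Finset (Sym2 (Vtx m n))} {u v w : Vtx m n}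
    (h : IsTwoRegularOffEnds (A, u, v)) (hwu : w ≠ u)
    (hB : ∀ x, x ≠ u → x ≠ w → bdeg m n B x = bdeg m n A x)
    (hBu : u ≠ v → bdeg m n B u = 2) (hBv : w = v → bdeg m n B v = 2) :
    IsTwoRegularOffEnds (B, w, v) := by
  intro x
  dsimp only
  by_cases hx : (x = w ∨ x = v) ∧ w ≠ v
  · exact .inr hx
  refine .inl ?_
  by_cases hxu : x = u
  · rw [hxu] at hx ⊢
    exact hBu fun huv => hx ⟨.inr huv, huv ▸ hwu⟩
  by_cases hxw : x = w
  · have hwv : w = v := not_not.1 fun hwv => hx ⟨.inl hxw, hwv⟩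
    rw [hxw, hwv]
    exact hBv hwv
  · rw [hB x hxu hxw]
    exact (h x).resolve_right fun ⟨hxuv, _⟩ => by grind

section

variable [NeZero m] [NeZero n]

lemma Worm.IsTwoRegularOffEnds.headMove (hm : Even m) (hn : Even n) {p q : Worm m n}
    (hp : IsWormState m n p.1 p.2.1 p.2.2) (h : p.IsTwoRegularOffEnds) (hpq : HeadMove p q) :
    q.IsTwoRegularOffEnds := by
  obtain ⟨A, u, v⟩ := p
  dsimp only at hp
  have hoff : ∀ x, x ≠ u → x ≠ v → bdeg m n A x = 2 := fun x hxu hxv =>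
    (h x).resolve_right fun ⟨hx, _⟩ => hx.elim hxu hxv
  have hnotMem : ∀ {x w : Vtx m n}, x ≠ u → x ≠ w → x ∉ s(u, w) := by
    intro x w hxu hxw; simp [hxu, hxw]
  cases hpq with
  | start hvw he =>
    refine h.toggle (hvw.ne hm hn) (fun x hxu hxw => ?_) (absurd rfl)
      (absurd · (hvw.ne hm hn))
    rw [bdeg_insert he, if_neg (hnotMem hxu hxw), add_zero]
  | grow huv hdeg huw he =>
    refine h.toggle (huw.ne hm hn) (fun x hxu hxw => ?_) (fun _ => ?_) (fun hwv => ?_)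
    · rw [bdeg_insert he, if_neg (hnotMem hxu hxw), add_zero]
    · rw [bdeg_insert he, if_pos (Sym2.mem_mk_left _ _), hdeg]
    · subst hwv
      rw [bdeg_insert he, if_pos (Sym2.mem_mk_right _ _),
        ← bdeg_eq_of_honeyAdj hm hn hp.1 huw hoff, hdeg]
  | @shrink _ _ _ w huv hdeg huw he =>
    have hA := bdeg_erase he
    refine h.toggle (huw.ne hm hn) (fun x hxu hxw => ?_) (fun _ => ?_) (fun hwv => ?_)
    · have := hA x
      rw [if_neg (hnotMem hxu hxw)] at this
      omega
    · have := hA u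
      rw [if_pos (Sym2.mem_mk_left _ _)] at this
      omega
    · subst hwv
      have := hA w
      rw [if_pos (Sym2.mem_mk_right _ _), ← bdeg_eq_of_honeyAdj hm hn hp.1 huw hoff] at this
      omega

lemma Worm.IsTwoRegularOffEnds.wormMove (hm : Even m) (hn : Even n) {p q : Worm m n}
    (hp : IsWormState m n p.1 p.2.1 p.2.2) (h : p.IsTwoRegularOffEnds) (hpq : WormMove p q) :
    q.IsTwoRegularOffEnds :=
  hpq.elim (h.headMove hm hn hp) fun hpq => (h.swapEnds.headMove hm hn hp.swap hpq).swapEnds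

lemma Worm.IsTwoRegularOffEnds.bdeg_ne_zero {p : Worm m n}
    (hp : IsWormState m n p.1 p.2.1 p.2.2) (h : p.IsTwoRegularOffEnds) (x : Vtx m n) :
    bdeg m n p.1 x ≠ 0 := by
  rcases h x with h2 | hx
  · omega
  · intro h0
    exact Nat.not_odd_zero (h0 ▸ (hp.2 x).2 hx)

lemma isTwoRegularOffEnds_of_reaches (hm : Even m) (hn : Even n) {s t : WormState m n}
    (hs : Worm.IsTwoRegularOffEnds s.1) (h : Reaches m n s t) :
    Worm.IsTwoRegularOffEnds t.1 := by
  rw [reaches_iff_reflTransGen] at h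
  induction h with
  | refl => exact hs
  | @tail b c _ hpos ih =>
    rcases eq_or_wormMove_of_pinf_pos hpos with rfl | hmove
    exacts [ih, ih.wormMove hm hn b.2 hmove]

end

end

theorem transience_prop_general (m n : ℕ) [NeZero m] [NeZero n]
    (hm : Even m) (hn : Even n) (hm4 : 4 ≤ m) :
    (∀ st : WormState m n, ∃ tt : WormState m n,
        tt.1.1 = Hconfig m n ∧ (∃ w : Vtx m n, tt.1.2 = (w, w)) ∧ Reaches m n st tt) ∧
    (∀ st : WormState m n, ¬ FullSupport m n st →
        ∃ tt : WormState m n, FullSupport m n tt ∧ Reaches m n st tt ∧ ¬ Reaches m n tt st) := by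
  have hm2 : 2 < m := by omega
  have hH (w : Vtx m n) : IsWormState m n (Hconfig m n) w w :=
    ⟨Hconfig_subset_honeyEdges hn, fun x => by simp [bdeg_Hconfig hm hn hm2]⟩
  have reaches_H (st : WormState m n) : ∃ w, Reaches m n st ⟨(Hconfig m n, w, w), hH w⟩ := by
    obtain ⟨w, hw⟩ := exists_reflTransGen_Hconfig hm hn hm2 st.2
    obtain ⟨_, hr⟩ := exists_reaches_of_reflTransGen hm hn st.2 hw
    exact ⟨w, hr⟩
  refine ⟨fun st => ?_, fun st hst => ?_⟩
  · obtain ⟨w, hr⟩ := reaches_H st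
    exact ⟨_, rfl, ⟨w, rfl⟩, hr⟩
  · obtain ⟨w, hr⟩ := reaches_H st
    refine ⟨_, fun x => by simp [bdeg_Hconfig hm hn hm2], hr, fun hback => hst ?_⟩
    exact (isTwoRegularOffEnds_of_reaches hm hn (fun x => .inl (bdeg_Hconfig hm hn hm2 x))
      hback).bdeg_ne_zero st.2

theorem transience_prop (m n : ℕ) [NeZero m] [NeZero n]
    (hm : Even m) (hn : Even n) (hm4 : 4 ≤ m) (hn4 : 4 ≤ n) :
    (∀ st : WormState m n, ∃ tt : WormState m n,
        tt.1.1 = Hconfig m n ∧ (∃ w : Vtx m n, tt.1.2 = (w, w)) ∧ Reaches m n st tt) ∧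
    (∀ st : WormState m n, ¬ FullSupport m n st →
        ∃ tt : WormState m n, FullSupport m n tt ∧ Reaches m n st tt ∧ ¬ Reaches m n tt st) :=
  transience_prop_general m n hm hn hm4

end FPL
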